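/- arXiv:2601.15871 — 2 statements merged into one kernel-verified Lean document; each statement's English description precedes it below -/
import Mathlib

section
/- Let n ≥ 2, let R be a relation on Fin n, and let S = Relation.ReflGen R be its reflexive closure (S a b ↔ a = b ∨ R a b). Then for every t ∈ ℕ with 2^t ≥ n - 1, relPow S (2^t) = Relation.ReflTransGen R. Consequently, starting from A⁽⁰⁾ = I ∨ A and repeatedly Boolean-squaring, A⁽ᵗ⁺¹⁾ = A⁽ᵗ⁾ ⊙ A⁽ᵗ⁾, one obtains the reflexive transitive closure A* after t = ⌈log₂(n-1)⌉ iterations. -/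
/-!
A chain of `k` steps of the reflexive closure of `R` is an `R`-chain of length at most `k`,
and every `R`-chain is one. Conversely, an `R`-chain through more than `card α - 1` steps
visits some vertex twice (pigeonhole), and cutting out the cycle between the two visits
shortens it; so every pair related by `ReflTransGen R` is joined by an `R`-chain of length
at most `card α - 1`, hence by a `ReflGen R`-chain of any length `k ≥ card α - 1`, such as `2 ^ t`.
-/

/-- The `k`-fold relational power: `relPow R k a b` means there is a chain
`a = c₀, c₁, …, c_k = b` with `R c_p c_{p+1}` for all `p`. -/
def relPow {α : Type*} (R : α → α → Prop) : ℕ → α → α → Prop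
  | 0 => Eq
  | k + 1 => Relation.Comp R (relPow R k)

section RelPow

variable {α : Type*} {R : α → α → Prop}

theorem relPow_add (m k : ℕ) (a b : α) :
    relPow R (m + k) a b ↔ ∃ c, relPow R m a c ∧ relPow R k c b := by
  induction m generalizing a with
  | zero => simp [relPow]
  | succ m ih =>
    rw [Nat.add_right_comm]
    simp only [relPow, Relation.Comp, ih]
    aesop

theorem reflTransGen_iff_exists_relPow {a b : α} :
    Relation.ReflTransGen R a b ↔ ∃ k, relPow R k a b := by
  constructor
  · intro h
    induction h using Relation.ReflTransGen.head_induction_on with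
    | refl => exact ⟨0, rfl⟩
    | head hac _ ih =>
      obtain ⟨k, hk⟩ := ih
      exact ⟨k + 1, _, hac, hk⟩
  · rintro ⟨k, hk⟩
    induction k generalizing a with
    | zero => exact hk ▸ Relation.ReflTransGen.refl
    | succ k ih =>
      obtain ⟨c, hac, hcb⟩ := hk
      exact .head hac (ih hcb)

theorem relPow_reflGen_iff {k : ℕ} {a b : α} :
    relPow (Relation.ReflGen R) k a b ↔ ∃ j ≤ k, relPow R j a b := by
  induction k generalizing a with
  | zero => simp [relPow]
  | succ k ih =>
    constructor
    · rintro ⟨c, _ | hac, hcb⟩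
      · obtain ⟨j, hjk, hj⟩ := ih.1 hcb
        exact ⟨j, by omega, hj⟩
      · obtain ⟨j, hjk, hj⟩ := ih.1 hcb
        exact ⟨j + 1, by omega, c, hac, hj⟩
    · rintro ⟨_ | j, hjk, hj⟩
      · exact ⟨a, .refl, ih.2 ⟨0, by omega, hj⟩⟩
      · obtain ⟨c, hac, hcb⟩ := hj
        exact ⟨c, .single hac, ih.2 ⟨j, by omega, hcb⟩⟩

theorem exists_relPow_lt_of_card_le [Fintype α] {k : ℕ} {a b : α} (h : relPow R k a b)
    (hk : Fintype.card α ≤ k) : ∃ j < k, relPow R j a b := by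
  have hsplit (i : Fin (k + 1)) : ∃ c, relPow R i a c ∧ relPow R (k - i) c b :=
    (relPow_add i (k - i) a b).1 (by rwa [Nat.add_sub_cancel' (Nat.lt_succ_iff.1 i.2)])
  choose c hc using hsplit
  obtain ⟨p, q, hpq, hcpq⟩ :=
    Fintype.exists_ne_map_eq_of_card_lt c (by simpa using Nat.lt_succ_of_le hk)
  wlog hlt : p < q generalizing p q
  · exact this q p hpq.symm hcpq.symm (lt_of_le_of_ne (not_lt.1 hlt) hpq.symm)
  have hq := q.is_lt
  have hlt' : (p : ℕ) < q := hlt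
  exact ⟨p + (k - q), by omega, (relPow_add _ _ a b).2 ⟨c p, (hc p).1, hcpq ▸ (hc q).2⟩⟩

theorem exists_relPow_lt_card [Fintype α] {k : ℕ} {a b : α} (h : relPow R k a b) :
    ∃ j < Fintype.card α, relPow R j a b := by
  induction k using Nat.strong_induction_on with
  | _ k ih =>
    by_cases hk : k < Fintype.card α
    · exact ⟨k, hk, h⟩
    · obtain ⟨j, hjk, hj⟩ := exists_relPow_lt_of_card_le h (not_lt.1 hk)
      exact ih j hjk hj

theorem relPow_reflGen_eq_reflTransGen [Fintype α] {k : ℕ} (hk : Fintype.card α - 1 ≤ k) :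
    relPow (Relation.ReflGen R) k = Relation.ReflTransGen R := by
  funext a b
  refine propext ⟨fun h => ?_, fun h => ?_⟩
  · obtain ⟨j, -, hj⟩ := relPow_reflGen_iff.1 h
    exact reflTransGen_iff_exists_relPow.2 ⟨j, hj⟩
  · obtain ⟨j, hj⟩ := reflTransGen_iff_exists_relPow.1 h
    obtain ⟨j', hj', h'⟩ := exists_relPow_lt_card hj
    exact relPow_reflGen_iff.2 ⟨j', by omega, h'⟩

end RelPow

theorem kleene_valiant_squaring_general
    (n : ℕ) (R : Fin n → Fin n → Prop)
    (S : Fin n → Fin n → Prop) (hS : S = Relation.ReflGen R) :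
    ∀ t : ℕ, n - 1 ≤ 2 ^ t →
      relPow S (2 ^ t) = Relation.ReflTransGen R := by
  intro t ht
  subst hS
  exact relPow_reflGen_eq_reflTransGen (by simpa using ht)

/-- Kleene–Valiant iteration: starting from the reflexive closure
`S = I ∨ A` and Boolean-squaring, after `t` iterations with `2^t ≥ n - 1` one obtains
exactly the reflexive transitive closure `A*`. -/
theorem kleene_valiant_squaring
    (n : ℕ) (hn : 2 ≤ n) (R : Fin n → Fin n → Prop)
    (S : Fin n → Fin n → Prop) (hS : S = Relation.ReflGen R) :
    ∀ t : ℕ, n - 1 ≤ 2 ^ t →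
      relPow S (2 ^ t) = Relation.ReflTransGen R :=
  kleene_valiant_squaring_general n R S hS
end

section
/- Let R be a relation on a type α, let B a b ↔ Relation.ReflTransGen R a b ∧ Relation.ReflTransGen R b a be the mutual reachability equivalence, and let Q be the quotient of α by B. Define the condensation relation on Q by: P ⟶ P' iff P ≠ P' and there exist representatives a of P and b of P' with R a b. Then the condensation relation is acyclic: for every class P, ¬ Relation.TransGen (⟶) P P; that is, the condensation graph of a directed graph is a directed acyclic graph. -/
/-!
A path of condensation edges from `P` back to `P` lifts to a path in the original graph from a
representative of `P` to one of the next class `Q` and back, since within a class any two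
vertices reach each other. So the two classes are mutually reachable, i.e. `P = Q`, which an
edge of the condensation forbids.
-/

open Relation

section

variable {α : Type*} {R : α → α → Prop} {s : Setoid α}

theorem reflTransGen_of_reflTransGen_map (hs : ∀ a b, s.r a b → ReflTransGen R a b)
    {P Q : Quotient s} (h : ReflTransGen (Relation.Map R (Quotient.mk s) (Quotient.mk s)) P Q)
    {a b : α} (ha : Quotient.mk s a = P) (hb : Quotient.mk s b = Q) : ReflTransGen R a b := by
  subst ha
  induction h generalizing b with
  | refl => exact hs a b (Quotient.exact hb.symm)
  | tail _ hstep ih =>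
    obtain ⟨x, y, hxy, rfl, rfl⟩ := hstep
    exact ((ih rfl).tail hxy).trans (hs y b (Quotient.exact hb.symm))

theorem eq_of_map_of_reflTransGen_map
    (hs : ∀ a b, s.r a b ↔ ReflTransGen R a b ∧ ReflTransGen R b a) {P Q : Quotient s}
    (h : Relation.Map R (Quotient.mk s) (Quotient.mk s) P Q)
    (h' : ReflTransGen (Relation.Map R (Quotient.mk s) (Quotient.mk s)) Q P) : P = Q := by
  obtain ⟨a, b, hab, rfl, rfl⟩ := h
  have hba : ReflTransGen R b a :=
    reflTransGen_of_reflTransGen_map (fun x y hxy => ((hs x y).1 hxy).1) h' rfl rfl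
  exact Quotient.sound ((hs a b).2 ⟨.single hab, hba⟩)

end

/-- The condensation graph of a directed graph is a directed acyclic
graph: on the quotient by the mutual reachability equivalence, the condensation
relation admits no directed cycles. -/
theorem condensation_graph_acyclic
    {α : Type*} (R : α → α → Prop)
    (s : Setoid α)
    (hs : ∀ a b : α, s.r a b ↔
      Relation.ReflTransGen R a b ∧ Relation.ReflTransGen R b a)
    (E : Quotient s → Quotient s → Prop)
    (hE : ∀ P P' : Quotient s, E P P' ↔
      (P ≠ P' ∧ ∃ a b : α, Quotient.mk s a = P ∧ Quotient.mk s b = P' ∧ R a b)) :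
    ∀ P : Quotient s, ¬ Relation.TransGen E P P := by
  have hE_map : E ≤ Relation.Map R (Quotient.mk s) (Quotient.mk s) := fun P Q hPQ => by
    obtain ⟨-, a, b, ha, hb, hab⟩ := (hE P Q).1 hPQ
    exact ⟨a, b, hab, ha, hb⟩
  intro P hP
  obtain ⟨Q, hPQ, hQP⟩ := TransGen.head'_iff.mp hP
  exact ((hE P Q).1 hPQ).1
    (eq_of_map_of_reflTransGen_map hs (hE_map P Q hPQ) (ReflTransGen.mono hE_map _ _ hQP))
end
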